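/- arXiv:1208.2245 — 8 statements merged into one kernel-verified Lean document; each statement's English description precedes it below -/
import Mathlib

section
/- Let C and C' be simple curves in the Euclidean plane, say C = f '' (Set.Icc 0 1) for an injective continuous f : ℝ → ℝ² and C' = h '' (Set.Icc 0 1) for an injective continuous h : ℝ → ℝ², both of finite length, and let g : ℝ → ℝ² be continuous on [0,1] with g '' (Set.Icc 0 1) = C'. If for every point z ∈ C and every ε > 0 there exists w ∈ C' with dist z w < ε, then there exist a, b ∈ [0,1] with a ≤ b such that g '' (Set.Icc a b) = C. (Lemma 3.3.) -/
open Set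

local notation "ℝ²" => EuclideanSpace ℝ (Fin 2)

/-- Auxiliary interval lemma: if `ψ` is continuous on `[s,t]` with `ψ s = c`, `ψ t = d`,
`c ≤ d`, then some subinterval `[a,b] ⊆ [s,t]` satisfies `ψ '' [a,b] = [c,d]`. -/
lemma aux_interval (ψ : ℝ → ℝ) (s t c d : ℝ) (hst : s ≤ t)
    (cont : ContinuousOn ψ (Set.Icc s t)) (hs : ψ s = c) (ht : ψ t = d) (hcd : c ≤ d) :
    ∃ a ∈ Set.Icc s t, ∃ b ∈ Set.Icc s t, a ≤ b ∧ ψ '' Set.Icc a b = Set.Icc c d := by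
  -- b : minimal point of [s,t] where ψ = d
  set S : Set ℝ := {u ∈ Set.Icc s t | ψ u = d} with hS
  have hSclosed : IsClosed S := by
    have : S = Set.Icc s t ∩ ψ ⁻¹' {d} := by ext u; simp [hS, Set.mem_setOf_eq, Set.mem_inter_iff, Set.mem_preimage]
    rw [this]
    exact cont.preimage_isClosed_of_isClosed isClosed_Icc isClosed_singleton
  have hSne : S.Nonempty := ⟨t, ⟨Set.right_mem_Icc.2 hst, ht⟩⟩
  have hSbdd : BddBelow S := ⟨s, fun u hu => hu.1.1⟩
  set b := sInf S with hb
  have hbS : b ∈ S := hSclosed.csInf_mem hSne hSbdd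
  have hbmin : ∀ u ∈ S, b ≤ u := fun u hu => csInf_le hSbdd hu
  have hbI : b ∈ Set.Icc s t := hbS.1
  have hψb : ψ b = d := hbS.2
  -- a : maximal point of [s,b] where ψ = c
  set T : Set ℝ := {u ∈ Set.Icc s b | ψ u = c} with hT
  have hTclosed : IsClosed T := by
    have : T = Set.Icc s b ∩ ψ ⁻¹' {c} := by ext u; simp [hT, Set.mem_setOf_eq, Set.mem_inter_iff, Set.mem_preimage]
    rw [this]
    exact (cont.mono (Set.Icc_subset_Icc le_rfl hbI.2)).preimage_isClosed_of_isClosed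
      isClosed_Icc isClosed_singleton
  have hTne : T.Nonempty := ⟨s, ⟨Set.left_mem_Icc.2 hbI.1, hs⟩⟩
  have hTbdd : BddAbove T := ⟨b, fun u hu => hu.1.2⟩
  set a := sSup T with ha
  have haT : a ∈ T := hTclosed.csSup_mem hTne hTbdd
  have hamax : ∀ u ∈ T, u ≤ a := fun u hu => le_csSup hTbdd hu
  have hab : a ≤ b := haT.1.2
  have haI : a ∈ Set.Icc s t := ⟨haT.1.1, le_trans hab hbI.2⟩
  have hψa : ψ a = c := haT.2
  have hsub : Set.Icc a b ⊆ Set.Icc s t := Set.Icc_subset_Icc haI.1 hbI.2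
  have contab : ContinuousOn ψ (Set.Icc a b) := cont.mono hsub
  refine ⟨a, haI, b, hbI, hab, ?_⟩
  apply Set.Subset.antisymm
  · rintro _ ⟨u, hu, rfl⟩
    constructor
    · by_contra hlt
      push_neg at hlt
      -- ψ u < c ; find v ∈ [u,b] with ψ v = c, contradicting maximality of a
      have : c ∈ Set.Icc (ψ u) (ψ b) := ⟨le_of_lt hlt, hψb ▸ hcd⟩
      obtain ⟨v, hv, hψv⟩ := intermediate_value_Icc hu.2
        (contab.mono (Set.Icc_subset_Icc hu.1 le_rfl)) this
      have hvT : v ∈ T := ⟨⟨le_trans haI.1 (le_trans hu.1 hv.1), hv.2⟩, hψv⟩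
      have hva : v ≤ a := hamax v hvT
      have : v = u := le_antisymm (le_trans hva hu.1) hv.1
      rw [this] at hψv; exact absurd hψv (ne_of_lt hlt)
    · by_contra hlt
      push_neg at hlt
      -- ψ u > d ; find v ∈ [a,u] with ψ v = d, contradicting minimality of b
      have : d ∈ Set.Icc (ψ a) (ψ u) := ⟨hψa ▸ hcd, le_of_lt hlt⟩
      obtain ⟨v, hv, hψv⟩ := intermediate_value_Icc hu.1
        (contab.mono (Set.Icc_subset_Icc le_rfl hu.2)) this
      have hvS : v ∈ S := ⟨⟨le_trans haI.1 hv.1, le_trans hv.2 (le_trans hu.2 hbI.2)⟩, hψv⟩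
      have hbv : b ≤ v := hbmin v hvS
      have : v = u := le_antisymm hv.2 (le_trans hu.2 hbv)
      rw [this] at hψv; exact absurd hψv (ne_of_gt hlt)
  · have := intermediate_value_Icc hab contab
    rw [hψa, hψb] at this
    exact this

/-- Lemma 3.3: if `C` and `C'` are rectifiable simple curves, `g` parametrizes `C'`,
and every neighborhood of every point of `C` meets `C'`, then some subinterval of `[0,1]`
is mapped by `g` exactly onto `C`. -/
theorem stmt_0
    (f h g : ℝ → ℝ²) (C C' : Set ℝ²)
    (hfc : ContinuousOn f (Set.Icc 0 1)) (hfi : Set.InjOn f (Set.Icc 0 1))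
    (hfC : C = f '' Set.Icc 0 1)
    (hfLen : eVariationOn f (Set.Icc 0 1) < ⊤)
    (hhc : ContinuousOn h (Set.Icc 0 1)) (hhi : Set.InjOn h (Set.Icc 0 1))
    (hhC' : C' = h '' Set.Icc 0 1)
    (hhLen : eVariationOn h (Set.Icc 0 1) < ⊤)
    (hgc : ContinuousOn g (Set.Icc 0 1)) (hgC' : g '' Set.Icc 0 1 = C')
    (hclose : ∀ z ∈ C, ∀ ε > (0 : ℝ), ∃ w ∈ C', dist z w < ε) :
    ∃ a ∈ Set.Icc (0 : ℝ) 1, ∃ b ∈ Set.Icc (0 : ℝ) 1, a ≤ b ∧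
      g '' Set.Icc a b = C := by
  classical
  -- C' is compact, hence closed
  have hC'comp : IsCompact C' := hhC' ▸ isCompact_Icc.image_of_continuousOn hhc
  have hC'closed : IsClosed C' := hC'comp.isClosed
  have hCsub : C ⊆ C' := by
    intro z hz
    rw [← hC'closed.closure_eq, Metric.mem_closure_iff]
    exact fun ε hε => hclose z hz ε hε
  have hCcomp : IsCompact C := hfC ▸ isCompact_Icc.image_of_continuousOn hfc
  have hCne : C.Nonempty := ⟨f 0, hfC ▸ Set.mem_image_of_mem f (by norm_num)⟩
  have hCconn : IsConnected C := by
    rw [hfC]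
    exact (isConnected_Icc (by norm_num : (0:ℝ) ≤ 1)).image f hfc
  haveI : CompactSpace (Set.Icc (0:ℝ) 1) := isCompact_iff_compactSpace.mp isCompact_Icc
  -- h as a continuous bijection from [0,1] to C', and its homeomorphism
  set hr : (Set.Icc (0:ℝ) 1) → C' := fun u => ⟨h u, hhC' ▸ Set.mem_image_of_mem h u.2⟩ with hhr
  have hrcont : Continuous hr :=
    (continuousOn_iff_continuous_restrict.mp hhc).subtype_mk _
  have hrbij : Function.Bijective hr := by
    constructor
    · intro u v huv
      exact Subtype.ext (hhi u.2 v.2 (congrArg Subtype.val huv))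
    · rintro ⟨w, hw⟩
      rw [hhC'] at hw
      obtain ⟨u, hu, rfl⟩ := hw
      exact ⟨⟨u, hu⟩, rfl⟩
  set E : (Set.Icc (0:ℝ) 1) ≃ C' := Equiv.ofBijective hr hrbij with hE
  have hEc : Continuous E := hrcont
  set Φ : (Set.Icc (0:ℝ) 1) ≃ₜ C' := hEc.homeoOfEquivCompactToT2 with hΦ
  have hΦ_apply : ∀ u, (Φ u : ℝ²) = h u := fun u => rfl
  -- g as a map into C'
  set Gs : (Set.Icc (0:ℝ) 1) → C' := fun u => ⟨g u, hgC' ▸ Set.mem_image_of_mem g u.2⟩ with hGs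
  have hGscont : Continuous Gs :=
    (continuousOn_iff_continuous_restrict.mp hgc).subtype_mk _
  -- the transferred parametrization ψ
  set ψ : ℝ → ℝ := fun x => ((Φ.symm (Gs (Set.projIcc 0 1 zero_le_one x)) : Set.Icc (0:ℝ) 1) : ℝ)
    with hψ
  have hψcont : Continuous ψ :=
    continuous_subtype_val.comp (Φ.symm.continuous.comp (hGscont.comp continuous_projIcc))
  have hψmem : ∀ x, ψ x ∈ Set.Icc (0:ℝ) 1 := fun x => (Φ.symm _).2
  have hkey : ∀ x ∈ Set.Icc (0:ℝ) 1, h (ψ x) = g x := by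
    intro x hx
    have h1 : Set.projIcc 0 1 zero_le_one x = ⟨x, hx⟩ := Set.projIcc_of_mem _ hx
    have h2 : (Φ (Φ.symm (Gs ⟨x, hx⟩)) : ℝ²) = (Gs ⟨x, hx⟩ : ℝ²) := by
      rw [Φ.apply_symm_apply]
    rw [hψ]
    simp only [h1]
    rw [← hΦ_apply (Φ.symm (Gs ⟨x, hx⟩))] at *
    exact h2
  -- the set K = ψ-coordinates of C
  set V : Set C' := Subtype.val ⁻¹' C with hV
  have hVr : V = Set.range (Set.inclusion hCsub) := (Set.range_inclusion hCsub).symm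
  haveI : CompactSpace C := isCompact_iff_compactSpace.mp hCcomp
  haveI : ConnectedSpace C := Subtype.connectedSpace hCconn
  have hinccont : Continuous (Set.inclusion hCsub) := continuous_inclusion hCsub
  have hVcomp : IsCompact V := hVr ▸ isCompact_range hinccont
  have hVconn : IsConnected V := hVr ▸ isConnected_range hinccont
  set K : Set ℝ := Subtype.val '' (Φ.symm '' V) with hK
  have hKcomp : IsCompact K :=
    ((hVcomp.image Φ.symm.continuous).image continuous_subtype_val)
  have hKconn : IsConnected K :=
    ((hVconn.image _ Φ.symm.continuous.continuousOn).image _ continuous_subtype_val.continuousOn)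
  have hKsub : K ⊆ Set.Icc (0:ℝ) 1 := by
    rintro _ ⟨x, _, rfl⟩
    exact x.2
  have hhK : h '' K = C := by
    apply Set.Subset.antisymm
    · rintro _ ⟨_, ⟨x, ⟨v, hv, rfl⟩, rfl⟩, rfl⟩
      have : h ((Φ.symm v : Set.Icc (0:ℝ) 1) : ℝ) = (v : ℝ²) := by
        rw [← hΦ_apply (Φ.symm v), Φ.apply_symm_apply]
      rw [this]
      exact hv
    · intro z hz
      refine ⟨((Φ.symm ⟨z, hCsub hz⟩ : Set.Icc (0:ℝ) 1) : ℝ),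
        ⟨Φ.symm ⟨z, hCsub hz⟩, ⟨⟨z, hCsub hz⟩, hz, rfl⟩, rfl⟩, ?_⟩
      rw [← hΦ_apply (Φ.symm ⟨z, hCsub hz⟩), Φ.apply_symm_apply]
  have hKne : K.Nonempty := by
    obtain ⟨z, hz⟩ := hCne
    rw [← hhK] at hz
    obtain ⟨k, hk, -⟩ := hz
    exact ⟨k, hk⟩
  obtain hKIcc := eq_Icc_of_connected_compact hKconn hKcomp
  set c := sInf K with hc
  set d := sSup K with hd
  have hcd : c ≤ d := by
    have := hKne
    rw [hKIcc, Set.nonempty_Icc] at this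
    exact this
  have hcK : c ∈ K := by rw [hKIcc]; exact Set.left_mem_Icc.2 hcd
  have hdK : d ∈ K := by rw [hKIcc]; exact Set.right_mem_Icc.2 hcd
  -- find preimages of c and d under ψ
  have hfind : ∀ k ∈ K, ∃ u ∈ Set.Icc (0:ℝ) 1, ψ u = k := by
    intro k hk
    have h1 : h k ∈ C' := by rw [hhC']; exact Set.mem_image_of_mem h (hKsub hk)
    rw [← hgC'] at h1
    obtain ⟨u, hu, hgu⟩ := h1
    refine ⟨u, hu, ?_⟩
    have := hkey u hu
    rw [hgu] at this
    exact hhi (hψmem u) (hKsub hk) this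
  obtain ⟨uc, hucI, hψuc⟩ := hfind c hcK
  obtain ⟨ud, hudI, hψud⟩ := hfind d hdK
  -- apply the interval lemma (allowing either order of uc, ud)
  have hmain : ∃ a ∈ Set.Icc (0:ℝ) 1, ∃ b ∈ Set.Icc (0:ℝ) 1, a ≤ b ∧
      ψ '' Set.Icc a b = Set.Icc c d := by
    rcases le_total uc ud with hle | hle
    · obtain ⟨a, ha, b, hb, hab, himg⟩ :=
        aux_interval ψ uc ud c d hle hψcont.continuousOn hψuc hψud hcd
      have hsub : Set.Icc uc ud ⊆ Set.Icc (0:ℝ) 1 := Set.Icc_subset_Icc hucI.1 hudI.2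
      exact ⟨a, hsub ha, b, hsub hb, hab, himg⟩
    · obtain ⟨a', ha', b', hb', hab', himg'⟩ :=
        aux_interval (fun x => ψ (uc + ud - x)) ud uc c d hle
          (hψcont.comp (continuous_const.sub continuous_id)).continuousOn
          (by simpa using hψuc) (by simpa using hψud) hcd
      have hsub : Set.Icc ud uc ⊆ Set.Icc (0:ℝ) 1 := Set.Icc_subset_Icc hudI.1 hucI.2
      refine ⟨uc + ud - b', hsub ?_, uc + ud - a', hsub ?_, by linarith [hab'], ?_⟩
      · exact ⟨by linarith [hb'.2], by linarith [hb'.1]⟩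
      · exact ⟨by linarith [ha'.2], by linarith [ha'.1]⟩
      · rw [← himg']
        rw [show Set.Icc (uc + ud - b') (uc + ud - a')
            = (fun x => (uc + ud) - x) '' Set.Icc a' b' from
          (Set.image_const_sub_Icc (uc + ud) a' b').symm]
        rw [← Set.image_comp]
        rfl
  obtain ⟨a, haI, b, hbI, hab, himg⟩ := hmain
  refine ⟨a, haI, b, hbI, hab, ?_⟩
  have habsub : Set.Icc a b ⊆ Set.Icc (0:ℝ) 1 := Set.Icc_subset_Icc haI.1 hbI.2
  rw [← hKIcc] at himg
  apply Set.Subset.antisymm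
  · rintro _ ⟨u, hu, rfl⟩
    rw [← hkey u (habsub hu), ← hhK]
    exact Set.mem_image_of_mem h (himg ▸ Set.mem_image_of_mem ψ hu)
  · intro z hz
    rw [← hhK] at hz
    obtain ⟨k, hk, rfl⟩ := hz
    rw [← himg] at hk
    obtain ⟨u, hu, rfl⟩ := hk
    exact ⟨u, hu, (hkey u (habsub hu)).symm⟩
end

section
/- Let h : ℝ → ℝ be continuous on [0,1] and let u < v be real numbers with u, v ∈ h '' (Set.Icc 0 1). Then there exist a, b ∈ [0,1] such that h '' (Set.uIcc a b) = Set.Icc u v, i.e. h maps the closed interval between a and b exactly onto [u,v]. (Intermediate claim in the proof of Lemma 3.3.) -/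
lemma stmt_1_aux (h : ℝ → ℝ) (p q : ℝ) (hpq : p ≤ q)
    (hc : ContinuousOn h (Set.Icc p q)) (u v : ℝ) (huv : u < v)
    (hp : h p = u) (hq : h q = v) :
    ∃ a b, a ∈ Set.Icc p q ∧ b ∈ Set.Icc p q ∧ a ≤ b ∧
      h '' Set.Icc a b = Set.Icc u v := by
  -- b : first time h hits v
  set S : Set ℝ := Set.Icc p q ∩ h ⁻¹' {v} with hS
  have hScl : IsClosed S := hc.preimage_isClosed_of_isClosed isClosed_Icc isClosed_singleton
  have hSne : S.Nonempty := ⟨q, ⟨Set.right_mem_Icc.2 hpq, hq⟩⟩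
  have hSbdd : BddBelow S := ⟨p, fun x hx => hx.1.1⟩
  set b := sInf S with hb
  have hbS : b ∈ S := hScl.csInf_mem hSne hSbdd
  have hbv : h b = v := hbS.2
  have hpb : p ≤ b := hbS.1.1
  have hbq : b ≤ q := hbS.1.2
  -- a : last time h hits u before b
  set T : Set ℝ := Set.Icc p b ∩ h ⁻¹' {u} with hT
  have hTcl : IsClosed T :=
    (hc.mono (Set.Icc_subset_Icc le_rfl hbq)).preimage_isClosed_of_isClosed
      isClosed_Icc isClosed_singleton
  have hTne : T.Nonempty := ⟨p, ⟨Set.left_mem_Icc.2 hpb, hp⟩⟩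
  have hTbdd : BddAbove T := ⟨b, fun x hx => hx.1.2⟩
  set a := sSup T with ha
  have haT : a ∈ T := hTcl.csSup_mem hTne hTbdd
  have hau : h a = u := haT.2
  have hpa : p ≤ a := haT.1.1
  have hab : a ≤ b := haT.1.2
  have hsub : Set.Icc a b ⊆ Set.Icc p q :=
    Set.Icc_subset_Icc hpa hbq
  have hc' : ContinuousOn h (Set.Icc a b) := hc.mono hsub
  refine ⟨a, b, ⟨hpa, hab.trans hbq⟩, ⟨hpb, hbq⟩, hab, ?_⟩
  apply Set.Subset.antisymm
  · rintro _ ⟨t, ht, rfl⟩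
    constructor
    · by_contra hlt
      push_neg at hlt
      have hta : a < t := lt_of_le_of_ne ht.1 (by rintro rfl; exact absurd hau hlt.ne)
      have : Set.Icc (h t) (h b) ⊆ h '' Set.Icc t b :=
        intermediate_value_Icc ht.2 (hc'.mono (Set.Icc_subset_Icc ht.1 le_rfl))
      obtain ⟨s, hs, hsu⟩ := this ⟨hlt.le, by rw [hbv]; exact huv.le⟩
      have hsT : s ∈ T := ⟨⟨hpa.trans (hta.le.trans hs.1), hs.2⟩, hsu⟩
      have : s ≤ a := le_csSup hTbdd hsT
      exact absurd (hta.trans_le hs.1) (not_lt.2 this)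
    · by_contra hlt
      push_neg at hlt
      have htb : t < b := lt_of_le_of_ne ht.2 (by rintro rfl; exact absurd hbv hlt.ne')
      have : Set.Icc (h a) (h t) ⊆ h '' Set.Icc a t :=
        intermediate_value_Icc ht.1 (hc'.mono (Set.Icc_subset_Icc le_rfl ht.2))
      obtain ⟨s, hs, hsv⟩ := this ⟨by rw [hau]; exact huv.le, hlt.le⟩
      have hsS : s ∈ S := ⟨⟨hpa.trans hs.1, (hs.2.trans htb.le).trans hbq⟩, hsv⟩
      have : b ≤ s := csInf_le hSbdd hsS
      exact absurd (lt_of_le_of_lt hs.2 htb) (not_lt.2 this)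
  · have := intermediate_value_Icc hab hc'
    rw [hau, hbv] at this
    exact this

/-- Intermediate claim in the proof of Lemma 3.3: a continuous real function on `[0,1]`
maps some closed subinterval exactly onto `[u,v]` whenever `u < v` are attained values. -/
theorem stmt_1 (h : ℝ → ℝ) (hc : ContinuousOn h (Set.Icc 0 1))
    (u v : ℝ) (huv : u < v)
    (hu : u ∈ h '' Set.Icc 0 1) (hv : v ∈ h '' Set.Icc 0 1) :
    ∃ a ∈ Set.Icc (0 : ℝ) 1, ∃ b ∈ Set.Icc (0 : ℝ) 1,
      h '' Set.uIcc a b = Set.Icc u v := by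
  obtain ⟨x, hx, hxu⟩ := hu
  obtain ⟨y, hy, hyv⟩ := hv
  rcases le_total x y with hxy | hyx
  · obtain ⟨a, b, haI, hbI, hab, him⟩ :=
      stmt_1_aux h x y hxy (hc.mono (Set.Icc_subset_Icc hx.1 hy.2)) u v huv hxu hyv
    refine ⟨a, ⟨hx.1.trans haI.1, haI.2.trans hy.2⟩,
            b, ⟨hx.1.trans hbI.1, hbI.2.trans hy.2⟩, ?_⟩
    rwa [Set.uIcc_of_le hab]
  · -- reflect: apply aux to h ∘ neg on [-x, -y]
    have hneg : ContinuousOn (h ∘ Neg.neg) (Set.Icc (-x) (-y)) := by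
      apply hc.comp continuous_neg.continuousOn
      intro t ht
      simp only [Set.mem_Icc] at ht ⊢
      constructor
      · linarith [hy.1]
      · linarith [hx.2]
    obtain ⟨a, b, haI, hbI, hab, him⟩ :=
      stmt_1_aux (h ∘ Neg.neg) (-x) (-y) (neg_le_neg hyx) hneg u v huv
        (by simpa using hxu) (by simpa using hyv)
    simp only [Set.mem_Icc] at haI hbI
    refine ⟨-b, ⟨by linarith [hy.1], by linarith [hx.2]⟩,
            -a, ⟨by linarith [hy.1], by linarith [hx.2]⟩, ?_⟩
    rw [Set.uIcc_of_le (neg_le_neg hab)]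
    rw [← him, show Set.Icc (-b) (-a) = Neg.neg '' Set.Icc a b by
      rw [Set.image_neg_Icc], Set.image_image]
    rfl
end

section
/- Let a < b be reals and let f : ℝ → ℝ² be continuous on [a,b]. For every ε > 0 there exists δ' > 0 such that every (q,δ)-sweep [t₀,t₃] ⊆ [a,b] of f with δ ≥ ε satisfies t₃ − t₀ ≥ 3·δ'. (Key step in the proof of Lemma 5.1.) -/
local notation "ℝ²" => EuclideanSpace ℝ (Fin 2)

/-- `[t₀, t₃]` is a `(q, δ)`-sweep of `f`: there are `t₀ < t₁ < t₂ < t₃` and a point `p`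
with `dist p q = δ` such that `f` travels from `q` to `p`, back to `q`, and forward to `p`
again, retracing the same curve segment. -/
def IsSweep (f : ℝ → ℝ²) (q : ℝ²) (δ : ℝ) (t₀ t₃ : ℝ) : Prop :=
  ∃ t₁ t₂ : ℝ, ∃ p : ℝ², t₀ < t₁ ∧ t₁ < t₂ ∧ t₂ < t₃ ∧ dist p q = δ ∧
    f t₀ = q ∧ f t₂ = q ∧ f t₁ = p ∧ f t₃ = p ∧
    f '' Set.Icc t₀ t₁ = f '' Set.Icc t₁ t₂ ∧
    f '' Set.Icc t₁ t₂ = f '' Set.Icc t₂ t₃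

/-- Key step in the proof of Lemma 5.1: sweeps of amplitude at least `ε` occupy
intervals of length at least `3 δ'` for some uniform `δ' > 0`. -/
theorem stmt_2 (a b : ℝ) (hab : a < b) (f : ℝ → ℝ²)
    (hf : ContinuousOn f (Set.Icc a b)) :
    ∀ ε > (0 : ℝ), ∃ δ' > (0 : ℝ),
      ∀ (q : ℝ²) (δ t₀ t₃ : ℝ), Set.Icc t₀ t₃ ⊆ Set.Icc a b → δ ≥ ε →
        IsSweep f q δ t₀ t₃ → t₃ - t₀ ≥ 3 * δ' := by
  intro ε hε
  have huc : UniformContinuousOn f (Set.Icc a b) :=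
    (isCompact_Icc).uniformContinuousOn_of_continuous hf
  rw [Metric.uniformContinuousOn_iff] at huc
  obtain ⟨d, hd, hduc⟩ := huc ε hε
  refine ⟨d / 2, by linarith, ?_⟩
  rintro q δ t₀ t₃ hsub hδ ⟨t₁, t₂, p, h01, h12, h23, hpq, hf0, hf2, hf1, hf3, -, -⟩
  have ht03 : t₀ ≤ t₃ := by linarith
  have m0 : t₀ ∈ Set.Icc a b := hsub ⟨le_refl _, ht03⟩
  have m1 : t₁ ∈ Set.Icc a b := hsub ⟨by linarith, by linarith⟩
  have m2 : t₂ ∈ Set.Icc a b := hsub ⟨by linarith, by linarith⟩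
  have m3 : t₃ ∈ Set.Icc a b := hsub ⟨by linarith, le_refl _⟩
  have key : ∀ s t : ℝ, s ∈ Set.Icc a b → t ∈ Set.Icc a b →
      f s = q → f t = p → |t - s| ≥ d / 2 := by
    intro s t hs ht hfs hft
    by_contra h
    push_neg at h
    have : dist s t < d := by
      rw [Real.dist_eq, abs_sub_comm]; linarith
    have := hduc s hs t ht this
    rw [hfs, hft, dist_comm, hpq] at this
    linarith
  have k1 := key t₀ t₁ m0 m1 hf0 hf1
  have k2 := key t₂ t₁ m2 m1 hf2 hf1
  have k3 := key t₂ t₃ m2 m3 hf2 hf3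
  rw [abs_of_nonneg (by linarith)] at k1
  rw [abs_of_nonpos (by linarith)] at k2
  rw [abs_of_nonneg (by linarith)] at k3
  linarith
end

section
/- Let a < b be reals and let f : ℝ → ℝ² be continuous on [a,b], and let ε > 0. Then every family of pairwise disjoint closed intervals [t₀,t₃] ⊆ [a,b], each of which is a (q,δ)-sweep of f for some q ∈ ℝ² and some δ ≥ ε, is finite. (Lemma 5.1.) -/
local notation "ℝ²" => EuclideanSpace ℝ (Fin 2)

/-- Lemma 5.1: a continuous function on `[a,b]` admits only finitely many pairwise
disjoint `(q, δ)`-sweeps of amplitude `δ ≥ ε`. -/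
theorem stmt_3 (a b : ℝ) (hab : a < b) (f : ℝ → ℝ²)
    (hf : ContinuousOn f (Set.Icc a b)) (ε : ℝ) (hε : 0 < ε)
    (S : Set (ℝ × ℝ))
    (hsub : ∀ I ∈ S, Set.Icc I.1 I.2 ⊆ Set.Icc a b)
    (hsweep : ∀ I ∈ S, ∃ (q : ℝ²) (δ : ℝ), δ ≥ ε ∧ IsSweep f q δ I.1 I.2)
    (hdisj : S.Pairwise fun I J => Disjoint (Set.Icc I.1 I.2) (Set.Icc J.1 J.2)) :
    S.Finite := by
  obtain ⟨η, hη, hunif⟩ := Metric.uniformContinuousOn_iff.mp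
    (isCompact_Icc.uniformContinuousOn_of_continuous hf) ε hε
  -- each interval has length ≥ η
  have hlen : ∀ I ∈ S, I.1 + η ≤ I.2 := by
    intro I hI
    obtain ⟨q, δ, hδ, t₁, t₂, p, h01, h12, h23, hdpq, h0, h2, h1, h3, -, -⟩ := hsweep I hI
    have hI1 : I.1 ∈ Set.Icc a b := hsub I hI ⟨le_refl _, by linarith⟩
    have ht₁ : t₁ ∈ Set.Icc a b := hsub I hI ⟨by linarith, by linarith⟩
    by_contra h
    push_neg at h
    have hd : dist I.1 t₁ < η := by
      rw [Real.dist_eq, abs_lt]; constructor <;> linarith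
    have := hunif I.1 hI1 t₁ ht₁ hd
    rw [h0, h1, dist_comm] at this
    rw [hdpq] at this
    linarith
  have hin : ∀ I ∈ S, I.1 ∈ Set.Icc a b := by
    intro I hI
    exact hsub I hI ⟨le_refl _, by linarith [hlen I hI]⟩
  -- map to ℕ via floor
  set g : ℝ × ℝ → ℕ := fun I => ⌊(I.1 - a) / η⌋₊ with hg
  have hinj : Set.InjOn g S := by
    intro I hI J hJ heq
    by_contra hne
    have hdIJ := hdisj hI hJ hne
    have hIne : I.1 ∈ Set.Icc I.1 I.2 := ⟨le_refl _, by linarith [hlen I hI]⟩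
    have hJne : J.1 ∈ Set.Icc J.1 J.2 := ⟨le_refl _, by linarith [hlen J hJ]⟩
    -- so left endpoints are η-separated
    have key : ∀ x y : ℝ, x ∈ Set.Icc a b → y ∈ Set.Icc a b → x + η ≤ y →
        (⌊(x - a) / η⌋₊ : ℝ) < ⌊(y - a) / η⌋₊ + 1 ∧ ¬ ⌊(x - a) / η⌋₊ = ⌊(y - a) / η⌋₊ := by
      intro x y hx hy hxy
      have hx0 : 0 ≤ (x - a) / η := div_nonneg (by linarith [hx.1]) hη.le
      have hy0 : 0 ≤ (y - a) / η := div_nonneg (by linarith [hy.1]) hη.le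
      have h1 : (x - a) / η + 1 ≤ (y - a) / η := by
        rw [div_add' _ _ _ hη.ne', div_le_div_iff₀ hη hη]
        nlinarith
      have hfx : (⌊(x - a) / η⌋₊ : ℝ) ≤ (x - a) / η := Nat.floor_le hx0
      have hfy : (y - a) / η < ⌊(y - a) / η⌋₊ + 1 := Nat.lt_floor_add_one _
      constructor
      · linarith
      · intro hcontra
        have : ((⌊(x - a) / η⌋₊ : ℝ)) = ⌊(y - a) / η⌋₊ := by exact_mod_cast hcontra
        have hfy' : (⌊(y - a) / η⌋₊ : ℝ) ≤ (y - a) / η := Nat.floor_le hy0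
        linarith [Nat.lt_floor_add_one ((x - a) / η)]
    rcases le_total I.1 J.1 with hle | hle
    · have hJnot : J.1 ∉ Set.Icc I.1 I.2 :=
        Set.disjoint_right.mp hdIJ hJne
      have : I.2 < J.1 := by
        by_contra hc; push_neg at hc; exact hJnot ⟨hle, hc⟩
      have hsep : I.1 + η ≤ J.1 := by linarith [hlen I hI]
      exact (key I.1 J.1 (hin I hI) (hin J hJ) hsep).2 heq
    · have hInot : I.1 ∉ Set.Icc J.1 J.2 :=
        Set.disjoint_left.mp hdIJ hIne
      have : J.2 < I.1 := by
        by_contra hc; push_neg at hc; exact hInot ⟨hle, hc⟩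
      have hsep : J.1 + η ≤ I.1 := by linarith [hlen J hJ]
      exact (key J.1 I.1 (hin J hJ) (hin I hI) hsep).2 heq.symm
  have himg : g '' S ⊆ Set.Iic ⌊(b - a) / η⌋₊ := by
    rintro n ⟨I, hI, rfl⟩
    have : (I.1 - a) / η ≤ (b - a) / η := by
      gcongr
      exact (hin I hI).2
    exact Nat.floor_le_floor this
  exact Set.Finite.of_finite_image ((Set.finite_Iic _).subset himg) hinj
end

section
/- There exists an injective continuous map f : ℝ → ℝ² on [0,1] with f 0 = (0,0) and f 1 = (1,0) such that ‖f t₁ − f t₂‖ ≥ |t₁ − t₂| / 3 for all t₁, t₂ ∈ [0,1], and whose length is infinite: eVariationOn f (Set.Icc 0 1) = ⊤. Hence there is a simple (non-rectifiable) arc of infinite length admitting a parametrization that is bi-Lipschitz from below. (The geometric content of Theorem 2.2, proved via a Koch-type construction.) -/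
local notation "ℝ²" => EuclideanSpace ℝ (Fin 2)

/-!
The curve is the graph `t ↦ (t, g t)` of `g t = t (1 - t) sin (1 / t)` over `[0, 1]`.
The first coordinate gives `‖f t₁ - f t₂‖ ≥ |t₁ - t₂|`, and since the second coordinate is
1-Lipschitz the length of `f` is at least the variation of `g`. At the points
`tₙ = 2 / (π (2n + 1))` the function `g` alternates in sign with `|g tₙ| ≥ tₙ / 3`, so its
variation dominates a multiple of the harmonic series.
-/

open Set Real

namespace eVariationOn

variable {α E : Type*} [LinearOrder α]

theorem sum_le_of_antitone [PseudoEMetricSpace E] {f : α → E} {s : Set α} {n : ℕ} {u : ℕ → α}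
    (hu : Antitone u) (us : ∀ i, u i ∈ s) :
    ∑ i ∈ Finset.range n, edist (f (u (i + 1))) (f (u i)) ≤ eVariationOn f s := by
  rw [← comp_ofDual]
  exact sum_le (f := f ∘ OrderDual.ofDual) hu.dual_right us

theorem eq_top_of_antitone_of_not_summable [PseudoMetricSpace E] {f : α → E} {s : Set α}
    {u : ℕ → α} (hu : Antitone u) (us : ∀ i, u i ∈ s)
    (h : ¬Summable fun i => dist (f (u (i + 1))) (f (u i))) :
    eVariationOn f s = ⊤ := by
  have htsum : ∑' i, edist (f (u (i + 1))) (f (u i)) = ⊤ := by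
    simpa only [edist_nndist, coe_nndist] using
      ENNReal.tsum_coe_eq_top_iff_not_summable_coe.2 h
  rw [eq_top_iff, ← htsum, ENNReal.tsum_eq_iSup_nat]
  exact iSup_le fun n => sum_le_of_antitone hu us

end eVariationOn

noncomputable def graphCurve (g : ℝ → ℝ) (t : ℝ) : ℝ² :=
  (WithLp.equiv 2 (Fin 2 → ℝ)).symm ![t, g t]

section graphCurve

variable (g : ℝ → ℝ)

theorem abs_sub_le_norm_graphCurve_sub (t₁ t₂ : ℝ) :
    |t₁ - t₂| ≤ ‖graphCurve g t₁ - graphCurve g t₂‖ :=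
  PiLp.norm_apply_le (graphCurve g t₁ - graphCurve g t₂) 0

theorem graphCurve_injective : Function.Injective (graphCurve g) := fun t₁ t₂ h => by
  simpa [sub_eq_zero, h] using abs_sub_le_norm_graphCurve_sub g t₁ t₂

theorem eVariationOn_le_eVariationOn_graphCurve (s : Set ℝ) :
    eVariationOn g s ≤ eVariationOn (graphCurve g) s := by
  have hlip : LipschitzWith 1 fun x : ℝ² => x 1 :=
    LipschitzWith.of_edist_le fun x y => PiLp.edist_apply_le x y 1
  have hcomp : (fun x : ℝ² => x 1) ∘ graphCurve g = g := rfl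
  have := (hlip.lipschitzOnWith (s := univ)).comp_eVariationOn_le (mapsTo_univ (graphCurve g) s)
  rwa [hcomp, ENNReal.coe_one, one_mul] at this

end graphCurve

theorem Continuous.graphCurve {g : ℝ → ℝ} (hg : Continuous g) : Continuous (graphCurve g) := by
  refine (PiLp.continuous_toLp 2 _).comp (continuous_pi fun i => ?_)
  fin_cases i
  exacts [continuous_id, hg]

noncomputable def dampedSinInv (t : ℝ) : ℝ := t * (1 - t) * sin t⁻¹

@[simp] theorem dampedSinInv_zero : dampedSinInv 0 = 0 := by simp [dampedSinInv]

@[simp] theorem dampedSinInv_one : dampedSinInv 1 = 0 := by simp [dampedSinInv]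

theorem abs_dampedSinInv_le (t : ℝ) : |dampedSinInv t| ≤ |t * (1 - t)| := by
  rw [dampedSinInv, abs_mul]
  exact mul_le_of_le_one_right (abs_nonneg _) (abs_sin_le_one _)

theorem continuous_dampedSinInv : Continuous dampedSinInv := by
  rw [continuous_iff_continuousAt]
  intro t
  rcases eq_or_ne t 0 with rfl | ht
  · rw [ContinuousAt, dampedSinInv_zero]
    have hbound : Continuous fun s : ℝ => |s * (1 - s)| := by fun_prop
    refine squeeze_zero_norm (fun s => (norm_eq_abs _).trans_le (abs_dampedSinInv_le s)) ?_
    simpa using hbound.tendsto 0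
  · exact (continuous_id.mul (continuous_const.sub continuous_id)).continuousAt.mul
      (continuous_sin.continuousAt.comp (continuousAt_inv₀ ht))

/-- The points `t` with `t⁻¹ = π / 2 + n π`, where `sin t⁻¹ = (-1) ^ n`. -/
noncomputable def sinInvPeak (n : ℕ) : ℝ := 2 / (π * (2 * n + 1))

theorem sinInvPeak_pos (n : ℕ) : 0 < sinInvPeak n := by
  unfold sinInvPeak; positivity

theorem antitone_sinInvPeak : Antitone sinInvPeak := fun m n hmn => by
  unfold sinInvPeak
  gcongr

theorem sinInvPeak_le_two_div_three (n : ℕ) : sinInvPeak n ≤ 2 / 3 := by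
  unfold sinInvPeak
  gcongr
  nlinarith [pi_gt_three, (Nat.cast_nonneg n : (0 : ℝ) ≤ n)]

theorem dampedSinInv_sinInvPeak (n : ℕ) :
    dampedSinInv (sinInvPeak n) = (-1) ^ n * (sinInvPeak n * (1 - sinInvPeak n)) := by
  have hinv : (sinInvPeak n)⁻¹ = π / 2 + n * π := by
    rw [sinInvPeak, inv_div]; ring
  rw [dampedSinInv, hinv, sin_add_nat_mul_pi, sin_pi_div_two]
  ring

theorem inv_succ_le_dist_dampedSinInv_sinInvPeak (n : ℕ) :
    (3 * π)⁻¹ * (1 / (n + 1 : ℝ)) ≤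
      dist (dampedSinInv (sinInvPeak (n + 1))) (dampedSinInv (sinInvPeak n)) := by
  set a : ℕ → ℝ := fun k => sinInvPeak k * (1 - sinInvPeak k)
  have ha (k : ℕ) : sinInvPeak k / 3 ≤ a k := by
    nlinarith [sinInvPeak_pos k, sinInvPeak_le_two_div_three k]
  have hdist : dist (dampedSinInv (sinInvPeak (n + 1))) (dampedSinInv (sinInvPeak n)) =
      a (n + 1) + a n := by
    have hsign : (-1) ^ (n + 1) * a (n + 1) - (-1) ^ n * a n =
        (-1) ^ (n + 1) * (a (n + 1) + a n) := by
      ring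
    rw [dist_eq, dampedSinInv_sinInvPeak, dampedSinInv_sinInvPeak, hsign, abs_mul, abs_pow,
      abs_neg, abs_one, one_pow, one_mul, abs_of_nonneg]
    linarith [ha n, ha (n + 1), sinInvPeak_pos n, sinInvPeak_pos (n + 1)]
  have hpeak : sinInvPeak n / 3 = (3 * π)⁻¹ * (2 / (2 * n + 1)) := by
    unfold sinInvPeak
    field_simp
  have hharmonic : 1 / (n + 1 : ℝ) ≤ 2 / (2 * n + 1) := by
    rw [div_le_div_iff₀ (by positivity) (by positivity)]
    linarith
  calc (3 * π)⁻¹ * (1 / (n + 1 : ℝ)) ≤ sinInvPeak n / 3 := by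
        rw [hpeak]; gcongr
    _ ≤ a (n + 1) + a n := by linarith [ha n, ha (n + 1), sinInvPeak_pos (n + 1)]
    _ = _ := hdist.symm

theorem eVariationOn_dampedSinInv : eVariationOn dampedSinInv (Icc 0 1) = ⊤ := by
  refine eVariationOn.eq_top_of_antitone_of_not_summable antitone_sinInvPeak
    (fun n => ⟨(sinInvPeak_pos n).le, (sinInvPeak_le_two_div_three n).trans (by norm_num)⟩) ?_
  intro hsum
  have hharmonic : Summable fun n : ℕ => 1 / (n + 1 : ℝ) := by
    rw [← summable_mul_left_iff (a := (3 * π)⁻¹) (by positivity)]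
    exact hsum.of_nonneg_of_le (fun n => by positivity) inv_succ_le_dist_dampedSinInv_sinInvPeak
  exact not_summable_one_div_natCast <| (summable_nat_add_iff 1).1 <| by
    exact_mod_cast hharmonic

/-- Theorem 2.2 (geometric content): there is a simple arc of infinite length from
`(0,0)` to `(1,0)` admitting a parametrization that is bi-Lipschitz from below. -/
theorem stmt_7 :
    ∃ f : ℝ → ℝ², Set.InjOn f (Set.Icc 0 1) ∧ ContinuousOn f (Set.Icc 0 1) ∧
      f 0 = (WithLp.equiv 2 (Fin 2 → ℝ)).symm ![0, 0] ∧
      f 1 = (WithLp.equiv 2 (Fin 2 → ℝ)).symm ![1, 0] ∧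
      (∀ t₁ ∈ Set.Icc (0 : ℝ) 1, ∀ t₂ ∈ Set.Icc (0 : ℝ) 1,
        ‖f t₁ - f t₂‖ ≥ |t₁ - t₂| / 3) ∧
      eVariationOn f (Set.Icc 0 1) = ⊤ := by
  refine ⟨graphCurve dampedSinInv, (graphCurve_injective _).injOn,
    continuous_dampedSinInv.graphCurve.continuousOn, by simp [graphCurve], by simp [graphCurve],
    fun t₁ _ t₂ _ => ?_, ?_⟩
  · have := abs_sub_le_norm_graphCurve_sub dampedSinInv t₁ t₂
    linarith [abs_nonneg (t₁ - t₂)]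
  · exact top_unique <| eVariationOn_dampedSinInv ▸
      eVariationOn_le_eVariationOn_graphCurve dampedSinInv (Icc 0 1)
end

section
/- Let f : ℝ → ℝ² be injective and continuous on [0,1] with finite length eVariationOn f (Set.Icc 0 1) = ENNReal.ofReal L. Then for every ε > 0 there exist m ≥ 1 and a partition 0 = t₀ < t₁ < ⋯ < t_m = 1 such that Σ_{i<m} dist(f tᵢ, f tᵢ₊₁) ≥ L − ε and the Hausdorff distance between the curve f '' (Set.Icc 0 1) and the inscribed polygon ⋃_{i<m} segment ℝ (f tᵢ) (f tᵢ₊₁) is at most ε. (Inscribed-polygon approximation used in the proofs of Theorem 2.4 and Corollary 2.5.) -/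
local notation "ℝ²" => EuclideanSpace ℝ (Fin 2)

private lemma chain_dist' {E : Type*} [PseudoMetricSpace E] (g : ℕ → E) (a b : ℕ) (hab : a ≤ b) :
    dist (g a) (g b) ≤ ∑ j ∈ Finset.Ico a b, dist (g j) (g (j + 1)) := by
  have h := dist_le_range_sum_dist (fun k => g (a + k)) (b - a)
  rw [Finset.sum_Ico_eq_sum_range]
  simpa [Nat.add_sub_cancel' hab, add_assoc] using h

private lemma sum_chain' {E : Type*} [PseudoMetricSpace E] (g : ℕ → E) (a : ℕ → ℕ)
    (ha : Monotone a) (n : ℕ) :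
    ∑ i ∈ Finset.range n, dist (g (a i)) (g (a (i + 1))) ≤
      ∑ j ∈ Finset.Ico (a 0) (a n), dist (g j) (g (j + 1)) := by
  induction n with
  | zero => simp
  | succ n ih =>
    rw [Finset.sum_range_succ,
      ← Finset.sum_Ico_consecutive _ (ha (Nat.zero_le n)) (ha (Nat.le_succ n))]
    exact add_le_add ih (chain_dist' g _ _ (ha (Nat.le_succ n)))

/-- Inscribed-polygon approximation: a simple rectifiable curve admits inscribed polygons
of length within `ε` of the curve length and within Hausdorff distance `ε` of the curve. -/
theorem stmt_8 (f : ℝ → ℝ²)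
    (hfi : Set.InjOn f (Set.Icc 0 1)) (hfc : ContinuousOn f (Set.Icc 0 1))
    (L : ℝ) (hL : eVariationOn f (Set.Icc 0 1) = ENNReal.ofReal L)
    (ε : ℝ) (hε : 0 < ε) :
    ∃ (m : ℕ) (t : ℕ → ℝ), 1 ≤ m ∧ t 0 = 0 ∧ t m = 1 ∧
      (∀ i < m, t i < t (i + 1)) ∧
      (∑ i ∈ Finset.range m, dist (f (t i)) (f (t (i + 1)))) ≥ L - ε ∧
      Metric.hausdorffDist (f '' Set.Icc 0 1)
        (⋃ i ∈ Finset.range m, segment ℝ (f (t i)) (f (t (i + 1)))) ≤ ε := by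
  -- uniform continuity
  have huc := (isCompact_Icc (a := (0:ℝ)) (b := 1)).uniformContinuousOn_of_continuous hfc
  rw [Metric.uniformContinuousOn_iff] at huc
  obtain ⟨δ, hδ, hδ'⟩ := huc ε hε
  -- a fine grid
  obtain ⟨N, hN⟩ := exists_nat_gt (1 / δ)
  have hN0 : (0:ℝ) < N := lt_trans (by positivity) hN
  have hNδ : (1:ℝ) / N < δ := by
    rw [div_lt_iff₀ hN0]
    calc (1:ℝ) = δ * (1/δ) := by field_simp
    _ < δ * N := by exact mul_lt_mul_of_pos_left hN hδ
  -- a partition realizing variation up to ε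
  have key : ∃ (n : ℕ) (p : ℕ → ℝ), Monotone p ∧ (∀ i, p i ∈ Set.Icc (0:ℝ) 1) ∧
      L - ε ≤ ∑ i ∈ Finset.range n, dist (f (p i)) (f (p (i + 1))) := by
    by_cases hLε : L - ε ≤ 0
    · exact ⟨0, fun _ => 0, monotone_const, fun _ => by simp, by simpa using hLε⟩
    · push_neg at hLε
      have h1 : ENNReal.ofReal (L - ε) < eVariationOn f (Set.Icc 0 1) := by
        rw [hL]
        exact ENNReal.ofReal_lt_ofReal_iff (by linarith) |>.2 (by linarith)
      rw [eVariationOn, lt_iSup_iff] at h1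
      obtain ⟨⟨n, u, hu, hus⟩, hsum⟩ := h1
      refine ⟨n, u, hu, hus, ?_⟩
      have : (∑ i ∈ Finset.range n, edist (f (u (i + 1))) (f (u i)))
          = ENNReal.ofReal (∑ i ∈ Finset.range n, dist (f (u i)) (f (u (i + 1)))) := by
        rw [ENNReal.ofReal_sum_of_nonneg (fun i _ => dist_nonneg)]
        refine Finset.sum_congr rfl fun i _ => ?_
        rw [edist_dist, dist_comm]
      rw [this] at hsum
      exact le_of_lt ((ENNReal.ofReal_lt_ofReal_iff_of_nonneg (by linarith)).1 hsum)
  obtain ⟨n, p, hpmono, hpmem, hpsum⟩ := key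
  -- the finset of partition points
  set G : Finset ℝ :=
    (Finset.range (n + 1)).image p ∪ (Finset.range (N + 1)).image (fun i : ℕ => (i : ℝ) / N)
    with hG
  have hGsub : ∀ x ∈ G, x ∈ Set.Icc (0:ℝ) 1 := by
    intro x hx
    rw [hG, Finset.mem_union] at hx
    rcases hx with hx | hx
    · obtain ⟨i, _, rfl⟩ := Finset.mem_image.1 hx
      exact hpmem i
    · obtain ⟨i, hi, rfl⟩ := Finset.mem_image.1 hx
      rw [Finset.mem_range] at hi
      constructor
      · positivity
      · rw [div_le_one hN0]
        exact_mod_cast Nat.lt_succ_iff.1 hi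
  have hgrid : ∀ i : ℕ, i ≤ N → (i : ℝ) / N ∈ G := fun i hi =>
    Finset.mem_union_right _ (Finset.mem_image.2 ⟨i, Finset.mem_range.2 (by omega), rfl⟩)
  have h0G : (0:ℝ) ∈ G := by simpa using hgrid 0 (Nat.zero_le N)
  have h1G : (1:ℝ) ∈ G := by
    have := hgrid N le_rfl
    rwa [div_self (ne_of_gt hN0)] at this
  have hpG : ∀ i, i ≤ n → p i ∈ G := fun i hi =>
    Finset.mem_union_left _ (Finset.mem_image.2 ⟨i, Finset.mem_range.2 (by omega), rfl⟩)
  have hcard2 : 2 ≤ G.card := Finset.one_lt_card.2 ⟨0, h0G, 1, h1G, by norm_num⟩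
  set m : ℕ := G.card - 1 with hm
  have hm1 : 1 ≤ m := by omega
  have hc : G.card = m + 1 := by omega
  set e := G.orderIsoOfFin hc with he
  set t : ℕ → ℝ := fun i => (e ⟨min i m, by omega⟩ : ℝ) with ht
  have htmem : ∀ i, t i ∈ G := fun i => (e _).2
  have htmono : Monotone t := by
    intro i j hij
    exact e.monotone (by simp [Fin.mk_le_mk]; omega)
  have htstrict : ∀ i j : ℕ, i ≤ m → j ≤ m → i < j → t i < t j := by
    intro i j hi hj hij
    exact e.strictMono (by simp [Fin.mk_lt_mk]; omega)
  have htj : ∀ j : Fin (m+1), t (j : ℕ) = (e j : ℝ) := by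
    intro j
    have hj : (⟨min (j : ℕ) m, by omega⟩ : Fin (m+1)) = j := Fin.ext (by
      have := j.isLt
      simp only [Fin.val_mk]
      omega)
    simp only [ht, hj]
  -- every element of G is some t j with j ≤ m
  have hsurj : ∀ x ∈ G, ∃ j ≤ m, t j = x := by
    intro x hx
    refine ⟨(e.symm ⟨x, hx⟩ : Fin (m+1)), by omega, ?_⟩
    rw [htj, e.apply_symm_apply]
  have ht0 : t 0 = 0 := by
    refine le_antisymm ?_ (hGsub _ (htmem 0)).1
    obtain ⟨j, hj, hjx⟩ := hsurj 0 h0G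
    rw [← hjx]
    exact htmono (Nat.zero_le j)
  have htm : t m = 1 := by
    refine le_antisymm (hGsub _ (htmem m)).2 ?_
    obtain ⟨j, hj, hjx⟩ := hsurj 1 h1G
    rw [← hjx]
    exact htmono hj
  -- no element of G strictly between consecutive t's
  have hgap : ∀ i < m, t (i + 1) - t i ≤ 1 / N := by
    intro i hi
    by_contra hcon
    push_neg at hcon
    set k : ℕ := ⌊(N : ℝ) * t i⌋₊ + 1 with hk
    have hti0 : 0 ≤ t i := (hGsub _ (htmem i)).1
    have hk1 : (N : ℝ) * t i < k := by
      push_cast [hk]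
      exact Nat.lt_floor_add_one _
    have hk2 : (k : ℝ) ≤ (N : ℝ) * t i + 1 := by
      push_cast [hk]
      have := Nat.floor_le (a := (N : ℝ) * t i) (by positivity)
      linarith
    have hlow : t i < (k : ℝ) / N := by
      rw [lt_div_iff₀ hN0]; linarith [hk1]
    have hhigh : (k : ℝ) / N < t (i + 1) := by
      rw [div_lt_iff₀ hN0]
      have : (1:ℝ)/N * N = 1 := by field_simp
      nlinarith [hcon]
    have hkN : k ≤ N := by
      by_contra hkN
      push_neg at hkN
      have h1' : (1:ℝ) < (k : ℝ) / N := by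
        rw [lt_div_iff₀ hN0]
        have : (N:ℝ) + 1 ≤ k := by exact_mod_cast hkN
        linarith
      have := (hGsub _ (htmem (i+1))).2
      linarith
    obtain ⟨j, hj, hjx⟩ := hsurj _ (hgrid k hkN)
    rcases le_or_gt j i with h' | h'
    · have := htmono h'
      rw [hjx] at this
      linarith
    · have : t (i+1) ≤ t j := htmono h'
      rw [hjx] at this
      linarith
  have hgapδ : ∀ i < m, t (i + 1) - t i < δ := fun i hi => lt_of_le_of_lt (hgap i hi) hNδ
  -- the sum over the refined partition dominates the p-sum
  have hsumge : L - ε ≤ ∑ i ∈ Finset.range m, dist (f (t i)) (f (t (i + 1))) := by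
    set a : ℕ → ℕ := fun i => ((e.symm ⟨p (min i n), hpG _ (min_le_right i n)⟩ : Fin (m+1)) : ℕ)
      with ha
    have hamono : Monotone a := by
      intro i j hij
      have : p (min i n) ≤ p (min j n) := hpmono (by omega)
      exact e.symm.monotone (by exact Subtype.mk_le_mk.2 this)
    have ham : ∀ i, a i ≤ m := fun i =>
      Nat.lt_succ_iff.1 (e.symm ⟨p (min i n), hpG _ (min_le_right i n)⟩).isLt
    have hta : ∀ i, t (a i) = p (min i n) := by
      intro i
      simp only [ha]
      rw [htj, e.apply_symm_apply]
    calc L - ε ≤ ∑ i ∈ Finset.range n, dist (f (p i)) (f (p (i + 1))) := hpsum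
    _ = ∑ i ∈ Finset.range n, dist (f (t (a i))) (f (t (a (i + 1)))) := by
        refine Finset.sum_congr rfl fun i hi => ?_
        rw [Finset.mem_range] at hi
        rw [hta, hta, min_eq_left (by omega), min_eq_left (by omega)]
    _ ≤ ∑ j ∈ Finset.Ico (a 0) (a n), dist (f (t j)) (f (t (j + 1))) :=
        sum_chain' (fun j => f (t j)) a hamono n
    _ ≤ ∑ i ∈ Finset.range m, dist (f (t i)) (f (t (i + 1))) := by
        refine Finset.sum_le_sum_of_subset_of_nonneg ?_ (fun _ _ _ => dist_nonneg)
        intro j hj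
        rw [Finset.mem_Ico] at hj
        rw [Finset.mem_range]
        have := ham n
        omega
  refine ⟨m, t, hm1, ht0, htm, fun i hi => htstrict i (i+1) (by omega) (by omega) (by omega),
    hsumge, ?_⟩
  -- Hausdorff distance
  refine Metric.hausdorffDist_le_of_mem_dist hε.le ?_ ?_
  · rintro x ⟨s, hs, rfl⟩
    -- find the interval containing s
    have hprop0 : t 0 ≤ s := by rw [ht0]; exact hs.1
    set i0 : ℕ := Nat.findGreatest (fun i => t i ≤ s) m with hi0
    have hi0le : i0 ≤ m := Nat.findGreatest_le m
    have hi0spec : t i0 ≤ s := by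
      rw [hi0]
      exact Nat.findGreatest_spec (P := fun i => t i ≤ s) (Nat.zero_le m) hprop0
    rcases eq_or_lt_of_le hi0le with heq | hlt
    · -- s = 1 = t m
      have hsm : s = t m := le_antisymm (htm ▸ hs.2) (heq ▸ hi0spec)
      refine ⟨f (t m), ?_, by rw [hsm]; simp [hε.le]⟩
      apply Set.mem_biUnion (Finset.mem_range.2 (show m - 1 < m by omega))
      have : m - 1 + 1 = m := by omega
      rw [this]
      exact right_mem_segment _ _ _
    · have hnot : ¬ t (i0 + 1) ≤ s := by
        refine Nat.findGreatest_is_greatest (P := fun i => t i ≤ s) (n := m) (k := i0 + 1)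
          ?_ (by omega)
        rw [← hi0]
        omega
      push_neg at hnot
      refine ⟨f (t i0), Set.mem_biUnion (Finset.mem_range.2 hlt) (left_mem_segment _ _ _), ?_⟩
      have hti0 : t i0 ∈ Set.Icc (0:ℝ) 1 := hGsub _ (htmem i0)
      have hdist : dist s (t i0) < δ := by
        rw [Real.dist_eq, abs_of_nonneg (by linarith [hi0spec])]
        have := hgapδ i0 hlt
        linarith
      exact (hδ' s hs (t i0) hti0 hdist).le
  · intro y hy
    rw [Set.mem_iUnion₂] at hy
    obtain ⟨i, hi, hy⟩ := hy
    rw [Finset.mem_range] at hi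
    refine ⟨f (t i), Set.mem_image_of_mem _ (hGsub _ (htmem i)), ?_⟩
    -- dist from f (t i) to a point of the segment is at most the segment length ≤ ε
    obtain ⟨u, v, hu, hv, huv, rfl⟩ := hy
    rw [dist_comm]
    have hseg : dist (f (t i)) (u • f (t i) + v • f (t (i+1))) ≤ dist (f (t i)) (f (t (i+1))) := by
      have : u • f (t i) + v • f (t (i+1)) - f (t i) = v • (f (t (i+1)) - f (t i)) := by
        have hu1 : u = 1 - v := by linarith
        rw [hu1]
        module
      rw [dist_eq_norm, ← neg_sub, norm_neg, this, norm_smul, Real.norm_of_nonneg hv,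
        dist_eq_norm, ← norm_neg, neg_sub]
      exact mul_le_of_le_one_left (norm_nonneg _) (by linarith)
    refine le_trans hseg ?_
    have h1 : t i ∈ Set.Icc (0:ℝ) 1 := hGsub _ (htmem i)
    have h2 : t (i+1) ∈ Set.Icc (0:ℝ) 1 := hGsub _ (htmem (i+1))
    have hdist : dist (t i) (t (i+1)) < δ := by
      rw [Real.dist_eq, abs_of_nonpos (by linarith [htmono (Nat.le_succ i)])]
      have := hgapδ i hi
      linarith
    exact (hδ' _ h1 _ h2 hdist).le
end

section
/- Let f : ℝ → ℝ² be injective and continuous on [0,1] with K = f '' (Set.Icc 0 1), and let (gᵢ)_{i∈ℕ} be a countable family of maps ℝ → ℝ², each injective and continuous on [0,1], with curves Cᵢ = gᵢ '' (Set.Icc 0 1). Suppose that for every i and all a, b with 0 ≤ a < b ≤ 1, the subarc f '' (Set.Icc a b) is not contained in Cᵢ. Then there exists a point z ∈ K with z ∉ Cᵢ for all i ∈ ℕ. (The topological core of Theorem 4.2: a simple curve sharing no nontrivial subarc with any member of a countable family of simple curves contains a point not covered by any member.) -/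
local notation "ℝ²" => EuclideanSpace ℝ (Fin 2)

/-- Topological core of Theorem 4.2: a simple curve `K` sharing no nontrivial subarc with
any member of a countable family of simple curves contains a point covered by no member. -/
theorem stmt_12 (f : ℝ → ℝ²)
    (hfi : Set.InjOn f (Set.Icc 0 1)) (hfc : ContinuousOn f (Set.Icc 0 1))
    (K : Set ℝ²) (hK : K = f '' Set.Icc 0 1)
    (g : ℕ → ℝ → ℝ²)
    (hgi : ∀ i, Set.InjOn (g i) (Set.Icc 0 1))
    (hgc : ∀ i, ContinuousOn (g i) (Set.Icc 0 1))
    (C : ℕ → Set ℝ²) (hCdef : ∀ i, C i = g i '' Set.Icc 0 1)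
    (hsub : ∀ (i : ℕ) (a b : ℝ), 0 ≤ a → a < b → b ≤ 1 →
      ¬ (f '' Set.Icc a b ⊆ C i)) :
    ∃ z ∈ K, ∀ i, z ∉ C i := by
  -- Work in the subtype X = Icc 0 1
  set X := (Set.Icc (0:ℝ) 1)
  set F : ℕ → Set X := fun i => (X.restrict f) ⁻¹' (C i) with hF
  have hCcl : ∀ i, IsClosed (C i) := by
    intro i
    rw [hCdef i]
    exact (isCompact_Icc.image_of_continuousOn (hgc i)).isClosed
  have hcont : Continuous (X.restrict f) := hfc.restrict
  have hFcl : ∀ i, IsClosed (F i) := fun i => (hCcl i).preimage hcont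
  -- each F i has empty interior
  have hFint : ∀ i, interior (F i) = ∅ := by
    intro i
    by_contra h
    obtain ⟨t, ht⟩ := Set.nonempty_iff_ne_empty.2 h
    obtain ⟨ε, hε, hball⟩ := Metric.mem_nhds_iff.1 (mem_interior_iff_mem_nhds.1 ht)
    set δ := min (ε/2) (1/2) with hδ
    have hδpos : 0 < δ := lt_min (by linarith) (by norm_num)
    have hδε : δ < ε := lt_of_le_of_lt (min_le_left _ _) (by linarith)
    have hδhalf : δ ≤ 1/2 := min_le_right _ _
    obtain ⟨ht0, ht1⟩ := t.2
    set t₀ := (t : ℝ)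
    have key : ∀ a b : ℝ, 0 ≤ a → a < b → b ≤ 1 → (∀ s ∈ Set.Icc a b, |s - t₀| ≤ δ) →
        False := by
      intro a b ha hab hb hclose
      refine hsub i a b ha hab hb ?_
      rintro x ⟨s, hs, rfl⟩
      have hsX : s ∈ X := ⟨le_trans ha hs.1, le_trans hs.2 hb⟩
      have : (⟨s, hsX⟩ : X) ∈ Metric.ball t ε := by
        simp only [Metric.mem_ball, Subtype.dist_eq, Real.dist_eq]
        exact lt_of_le_of_lt (hclose s hs) hδε
      exact hball this
    by_cases hcase : t₀ + δ ≤ 1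
    · exact key t₀ (t₀ + δ) ht0 (by linarith) hcase
        (fun s hs => abs_le.2 ⟨by linarith [hs.1], by linarith [hs.2]⟩)
    · push_neg at hcase
      have ha0 : 0 ≤ t₀ - δ := by linarith
      exact key (t₀ - δ) 1 ha0 (by linarith) le_rfl
        (fun s hs => abs_le.2 ⟨by linarith [hs.1], by linarith [hs.2]⟩)
  -- Baire
  have hdense : Dense (⋂ i, (F i)ᶜ) :=
    dense_iInter_of_isOpen (fun i => (hFcl i).isOpen_compl)
      (fun i => interior_eq_empty_iff_dense_compl.1 (hFint i))
  have hne : (⋂ i, (F i)ᶜ).Nonempty := by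
    have : Nonempty X := ⟨⟨0, by norm_num, by norm_num⟩⟩
    exact hdense.nonempty
  obtain ⟨t, ht⟩ := hne
  refine ⟨f t, hK ▸ ⟨t, t.2, rfl⟩, fun i hi => ?_⟩
  exact (Set.mem_iInter.1 ht i) hi
end

section
/- Let f, g : ℝ → ℝ² both be injective and continuous on [0,1] with the same image, f '' (Set.Icc 0 1) = g '' (Set.Icc 0 1). Then f and g have the same length: eVariationOn f (Set.Icc 0 1) = eVariationOn g (Set.Icc 0 1). Hence the length of a simple curve is independent of the choice of injective parametrization. (The invariance of curve length asserted in Section 2, on which the definition of the length l(C) of a simple curve rests.) -/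
local notation "ℝ²" => EuclideanSpace ℝ (Fin 2)

/-!
Two injective parametrizations `f`, `g` of the same simple arc differ by the reparametrization
`φ = g⁻¹ ∘ f` of `[0, 1]`. Since `g` is a continuous injection of a compact set into a Hausdorff
space, its inverse is continuous on the arc, so `φ` is a continuous bijection of `[0, 1]`, hence
monotone or antitone; and variation is invariant under monotone or antitone changes of variable.
-/

open Set Function

theorem IsCompact.continuousOn_invFunOn_image {α X : Type*} [TopologicalSpace α] [Nonempty α]
    [TopologicalSpace X] [T2Space X] {s : Set α} (hs : IsCompact s) {g : α → X}
    (hgc : ContinuousOn g s) (hgi : InjOn g s) :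
    ContinuousOn (invFunOn g s) (g '' s) := by
  rw [continuousOn_iff_isClosed]
  intro C hC
  refine ⟨g '' (s ∩ C),
    ((hs.inter_right hC).image_of_continuousOn (hgc.mono inter_subset_left)).isClosed, ?_⟩
  ext y
  simp only [mem_inter_iff, mem_preimage, mem_image]
  constructor
  · rintro ⟨hyC, x, hx, rfl⟩
    exact ⟨⟨invFunOn g s (g x), ⟨invFunOn_mem ⟨x, hx, rfl⟩, hyC⟩, invFunOn_eq ⟨x, hx, rfl⟩⟩,
      x, hx, rfl⟩
  · rintro ⟨⟨x, ⟨hx, hxC⟩, rfl⟩, -⟩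
    exact ⟨by rwa [hgi.leftInvOn_invFunOn hx], x, hx, rfl⟩

theorem exists_reparametrization_of_image_eq {α X : Type*} [TopologicalSpace α] [Nonempty α]
    [TopologicalSpace X] [T2Space X] {s : Set α} (hs : IsCompact s) {f g : α → X}
    (hfi : InjOn f s) (hfc : ContinuousOn f s) (hgi : InjOn g s) (hgc : ContinuousOn g s)
    (himg : f '' s = g '' s) :
    ∃ φ : α → α, ContinuousOn φ s ∧ InjOn φ s ∧ φ '' s = s ∧ EqOn (g ∘ φ) f s := by
  have hf_maps : MapsTo f s (g '' s) := himg ▸ mapsTo_image f s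
  have hgφ : EqOn (g ∘ invFunOn g s ∘ f) f s := fun _ hx => invFunOn_eq (hf_maps hx)
  refine ⟨invFunOn g s ∘ f, (hs.continuousOn_invFunOn_image hgc hgi).comp hfc hf_maps,
    fun x hx y hy hxy => hfi hx hy ?_, ?_, hgφ⟩
  · rw [← hgφ hx, ← hgφ hy, comp_apply, hxy]; rfl
  · rw [image_comp, himg, hgi.leftInvOn_invFunOn.image_image]

theorem eVariationOn_comp_of_injOn_Icc {α δ E : Type*} [ConditionallyCompleteLinearOrder α]
    [TopologicalSpace α] [OrderTopology α] [DenselyOrdered α] [LinearOrder δ] [TopologicalSpace δ]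
    [OrderClosedTopology δ] [PseudoEMetricSpace E] (g : δ → E) {φ : α → δ} {a b : α}
    (hab : a ≤ b) (hφc : ContinuousOn φ (Icc a b)) (hφi : InjOn φ (Icc a b)) :
    eVariationOn (g ∘ φ) (Icc a b) = eVariationOn g (φ '' Icc a b) := by
  rcases hφc.strictMonoOn_of_injOn_Icc' hab hφi with hφ | hφ
  · exact eVariationOn.comp_eq_of_monotoneOn g φ hφ.monotoneOn
  · exact eVariationOn.comp_eq_of_antitoneOn g φ hφ.antitoneOn

/-- The length of a simple curve is independent of the choice of injective
parametrization. -/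
theorem stmt_13 (f g : ℝ → ℝ²)
    (hfi : Set.InjOn f (Set.Icc 0 1)) (hfc : ContinuousOn f (Set.Icc 0 1))
    (hgi : Set.InjOn g (Set.Icc 0 1)) (hgc : ContinuousOn g (Set.Icc 0 1))
    (himg : f '' Set.Icc 0 1 = g '' Set.Icc 0 1) :
    eVariationOn f (Set.Icc 0 1) = eVariationOn g (Set.Icc 0 1) := by
  obtain ⟨φ, hφc, hφi, hφimg, hgφ⟩ :=
    exists_reparametrization_of_image_eq isCompact_Icc hfi hfc hgi hgc himg
  calc eVariationOn f (Icc 0 1) = eVariationOn (g ∘ φ) (Icc 0 1) :=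
        eVariationOn.eq_of_eqOn hgφ.symm
    _ = eVariationOn g (Icc 0 1) := by
        rw [eVariationOn_comp_of_injOn_Icc g zero_le_one hφc hφi, hφimg]
end
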